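/- For every k-module V there is a natural short exact sequence Tor_1^{k(Σ_n)}(γ_n/Lie(n), V^{⊗n}) ↪ Lie(n) ⊗_{k(Σ_n)} V^{⊗n} ↠ L_n(V), where the surjection sends [[x_1,x_2],…,x_n] ⊗ (a_1⊗⋯⊗a_n) to [[a_1,a_2],…,a_n]. In particular the natural map Lie(n) ⊗_{k(Σ_n)} V^{⊗n} → L_n(V) is surjective. -/

import Mathlib

open scoped TensorProduct

attribute [local instance 100] LieRing.ofAssociativeRing

/-- Left-normed Lie bracketing of a list, `⁅a,b⁆ = a*b - b*a`. -/
noncomputable def lnb {T : Type} [Ring T] : List T → T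
  | [] => 0
  | x :: xs => xs.foldl (fun a b => ⁅a, b⁆) x

section
variable (k : Type) [Field k] (n : ℕ)

/-- The canonical identification `V^{⊗n} → T(V)` of the tensor power with the degree-`n`
component of the tensor algebra, `a_1 ⊗ ⋯ ⊗ a_n ↦ a_1 ⋯ a_n`. -/
noncomputable def toT (V : Type) [AddCommGroup V] [Module k V] :
    (⨂[k] (i : Fin n), V) →ₗ[k] TensorAlgebra k V :=
  PiTensorProduct.lift
    ((MultilinearMap.mkPiAlgebraFin k n (TensorAlgebra k V)).compLinearMap
      fun _ => TensorAlgebra.ι k)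

/-- The `n`-th Lie power `L_n(V) ⊆ V^{⊗n}`: the elements whose image in the tensor algebra lies
in the free Lie algebra (the Lie subalgebra generated by `V`). -/
noncomputable def LiePow (V : Type) [AddCommGroup V] [Module k V] :
    Submodule k (⨂[k] (i : Fin n), V) :=
  Submodule.comap (toT k n V)
    (LieSubalgebra.lieSpan k (TensorAlgebra k V)
      (Set.range (TensorAlgebra.ι k : V →ₗ[k] TensorAlgebra k V))).toSubmodule

/-- The multilinear monomial `x_{σ(1)} ⊗ ⋯ ⊗ x_{σ(n)}`. -/
noncomputable def monom (σ : Equiv.Perm (Fin n)) : ⨂[k] (i : Fin n), (Fin n → k) :=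
  PiTensorProduct.tprod k (fun i => Pi.single (σ i) (1 : k))

/-- `γ_n`, the span of the multilinear monomials. -/
noncomputable def gamman : Submodule k (⨂[k] (i : Fin n), (Fin n → k)) :=
  Submodule.span k (Set.range fun σ : Equiv.Perm (Fin n) => monom k n σ)

/-- `Lie(n) = γ_n(L_n)`, the multilinear component of `L_n(V̄_n)`. -/
noncomputable def LieMulti : Submodule k (⨂[k] (i : Fin n), (Fin n → k)) :=
  LiePow k n (Fin n → k) ⊓ gamman k n

/-- The right `Σ_n`-action on `V̄_n^{⊗n}` by the substitution `x_i ↦ x_{σ(i)}`. -/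
noncomputable def rAct (σ : Equiv.Perm (Fin n)) :
    (⨂[k] (i : Fin n), (Fin n → k)) →ₗ[k] ⨂[k] (i : Fin n), (Fin n → k) :=
  PiTensorProduct.map fun _ : Fin n => LinearMap.funLeft k k ⇑σ.symm

variable (V : Type) [AddCommGroup V] [Module k V]

/-- The left `Σ_n`-action on `V^{⊗n}` permuting tensor factors. -/
noncomputable def lAct (σ : Equiv.Perm (Fin n)) :
    (⨂[k] (i : Fin n), V) →ₗ[k] ⨂[k] (i : Fin n), V :=
  (PiTensorProduct.reindex k (fun _ : Fin n => V) σ.symm).toLinearMap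

/-- The balancing relations defining `M ⊗_{k(Σ_n)} V^{⊗n}` for a right `k(Σ_n)`-module `M`
realized inside `V̄_n^{⊗n}` via `u`. -/
noncomputable def balRel (M : Type) [AddCommGroup M] [Module k M]
    (u : M →ₗ[k] ⨂[k] (i : Fin n), (Fin n → k)) :
    Submodule k (M ⊗[k] (⨂[k] (i : Fin n), V)) :=
  Submodule.span k
    {z | ∃ (x y : M) (σ : Equiv.Perm (Fin n)) (v : ⨂[k] (i : Fin n), V),
        u y = rAct k n σ (u x) ∧ z = y ⊗ₜ[k] v - x ⊗ₜ[k] (lAct k n V σ v)}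

end

/-!
Identify `γ_n` with `k(Σ_n)` through its basis of monomials. Then `g ⊗ v ↦ g • v` identifies
`γ_n ⊗_{k(Σ_n)} V^{⊗n}` with `V^{⊗n}`, and the map `Φ` is the composite
`Lie(n) ⊗_{k(Σ_n)} V^{⊗n} → γ_n ⊗_{k(Σ_n)} V^{⊗n} ≅ V^{⊗n}`, whose kernel is therefore that of
the first arrow. On pure tensors, `g • (a_1 ⊗ ⋯ ⊗ a_n)` is the image of `g` under the
substitution `x_i ↦ a_i`, a map of tensor algebras: it sends Lie elements to Lie elements and
`[[x_1,x_2],…,x_n]` to `[[a_1,a_2],…,a_n]`. Conversely the free Lie algebra on `V` is spanned by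
left-normed brackets of elements of `V`, and its degree-`n` part by those of length `n`, which
are images of `[[x_1,x_2],…,x_n] ⊗ (a_1 ⊗ ⋯ ⊗ a_n)`; here `[[x_1,x_2],…,x_n] ∈ Lie(n)` because
expanding it only produces products of permutations of `x_1, …, x_n`.
-/

section LeftNormedBracket

variable {R A : Type} [CommRing R] [Ring A] [Algebra R A]

lemma lnb_cons_append_singleton (x y : A) (l : List A) :
    lnb (x :: l ++ [y]) = ⁅lnb (x :: l), y⁆ := by
  simp [lnb, List.foldl_append]

lemma map_lnb {B F : Type} [Ring B] [FunLike F A B] [RingHomClass F A B] (f : F) (l : List A) :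
    f (lnb l) = lnb (l.map f) := by
  cases l with
  | nil => simp [lnb]
  | cons x l =>
    simp only [lnb, List.map_cons, List.foldl_map]
    exact (List.foldl_hom f fun a b => by simp [Ring.lie_def]).symm

lemma LieSubalgebra.lnb_mem (K : LieSubalgebra R A) {l : List A} (h : ∀ x ∈ l, x ∈ K) :
    lnb l ∈ K := by
  cases l with
  | nil => exact K.zero_mem
  | cons x l =>
    simp only [lnb, List.mem_cons, forall_eq_or_imp] at h ⊢
    induction l generalizing x with
    | nil => exact h.1
    | cons y l ih =>
      simp only [List.mem_cons, forall_eq_or_imp] at h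
      exact ih _ ⟨K.lie_mem h.1 h.2.1, h.2.2⟩

lemma lnb_mem_graded (𝒜 : ℕ → Submodule R A) [SetLike.GradedMonoid 𝒜] {l : List A}
    (h : ∀ x ∈ l, x ∈ 𝒜 1) : lnb l ∈ 𝒜 l.length := by
  cases l with
  | nil => exact zero_mem _
  | cons x l =>
    simp only [lnb, List.mem_cons, forall_eq_or_imp, List.length_cons] at h ⊢
    suffices ∀ (i : ℕ) (x : A), x ∈ 𝒜 i → (∀ y ∈ l, y ∈ 𝒜 1) →
        l.foldl (fun a b => ⁅a, b⁆) x ∈ 𝒜 (i + l.length) by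
      simpa [add_comm] using this 1 x h.1 h.2
    clear h x
    induction l with
    | nil => simp
    | cons y l ih =>
      intro i x hx hl
      simp only [List.mem_cons, forall_eq_or_imp] at hl
      have hxy : ⁅x, y⁆ ∈ 𝒜 (i + 1) := by
        rw [Ring.lie_def]
        refine sub_mem (SetLike.mul_mem_graded hx hl.1) ?_
        rw [add_comm]
        exact SetLike.mul_mem_graded hl.1 hx
      simpa [add_assoc, add_comm 1] using ih _ _ hxy hl.2

variable {X : Type} (f : X → A)

lemma lnb_mem_span_prod_perm (l : List X) :
    lnb (l.map f) ∈ Submodule.span R {y | ∃ m : List X, m.Perm l ∧ (m.map f).prod = y} := by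
  cases l with
  | nil => exact zero_mem _
  | cons x l =>
    suffices ∀ (l₀ : List X) (w : A),
        w ∈ Submodule.span R {y | ∃ m : List X, m.Perm l₀ ∧ (m.map f).prod = y} →
        (l.map f).foldl (fun a b => ⁅a, b⁆) w
          ∈ Submodule.span R {y | ∃ m : List X, m.Perm (l₀ ++ l) ∧ (m.map f).prod = y} from
      this [x] (f x) (Submodule.subset_span ⟨[x], .refl _, by simp⟩)
    induction l with
    | nil => simp
    | cons y l ih =>
      intro l₀ w hw
      rw [List.map_cons, List.foldl_cons, ← List.singleton_append, ← List.append_assoc]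
      refine ih _ _ ?_
      induction hw using Submodule.span_induction with
      | mem _ hp =>
        obtain ⟨m, hm, rfl⟩ := hp
        rw [Ring.lie_def]
        refine sub_mem (Submodule.subset_span ⟨m ++ [y], hm.append_right _, by simp⟩)
          (Submodule.subset_span ⟨y :: m, ?_, by simp⟩)
        exact (hm.cons y).trans (List.perm_append_singleton y l₀).symm
      | zero => simp
      | add _ _ _ _ h₁ h₂ => rw [add_lie]; exact add_mem h₁ h₂
      | smul c _ _ h => rw [smul_lie]; exact Submodule.smul_mem _ c h

lemma lieSpan_le_span_lnb :
    (LieSubalgebra.lieSpan R A (Set.range f)).toSubmodule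
      ≤ Submodule.span R (Set.range fun l : List X => lnb (l.map f)) := by
  set W := Submodule.span R (Set.range fun l : List X => lnb (l.map f))
  have lie_gen : ∀ u ∈ W, ∀ x, ⁅u, f x⁆ ∈ W := by
    intro u hu x
    induction hu using Submodule.span_induction with
    | mem _ hw =>
      obtain ⟨l, rfl⟩ := hw
      cases l with
      | nil => simp [lnb]
      | cons y l =>
        refine Submodule.subset_span ⟨y :: l ++ [x], ?_⟩
        simp only [List.map_append, List.map_cons, List.map_nil]
        exact lnb_cons_append_singleton _ _ _
    | zero => simp
    | add _ _ _ _ h₁ h₂ => rw [add_lie]; exact add_mem h₁ h₂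
    | smul c _ _ h => rw [smul_lie]; exact Submodule.smul_mem _ c h
  intro w hw
  suffices w ∈ W ∧ ∀ u ∈ W, ⁅u, w⁆ ∈ W from this.1
  induction hw using LieSubalgebra.lieSpan_induction with
  | mem _ hx =>
    obtain ⟨x, rfl⟩ := hx
    exact ⟨Submodule.subset_span ⟨[x], by simp [lnb]⟩, fun u hu => lie_gen u hu x⟩
  | zero => simp
  | add _ _ _ _ h₁ h₂ =>
    refine ⟨add_mem h₁.1 h₂.1, fun u hu => ?_⟩
    rw [lie_add]
    exact add_mem (h₁.2 u hu) (h₂.2 u hu)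
  | smul c _ _ h =>
    refine ⟨Submodule.smul_mem _ c h.1, fun u hu => ?_⟩
    rw [lie_smul]
    exact Submodule.smul_mem _ c (h.2 u hu)
  | lie x y _ _ hx hy =>
    refine ⟨hy.2 x hx.1, fun u hu => ?_⟩
    rw [leibniz_lie, ← lie_skew x]
    exact add_mem (hy.2 _ (hx.2 u hu)) (neg_mem (hx.2 _ (hy.2 u hu)))

end LeftNormedBracket

section TensorPower

variable {k : Type} [Field k] {n : ℕ} {V W : Type} [AddCommGroup V] [Module k V]
  [AddCommGroup W] [Module k W]

lemma toT_tprod (a : Fin n → V) :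
    toT k n V (PiTensorProduct.tprod k a) = TensorAlgebra.tprod k V n a := by
  simp [toT, TensorAlgebra.tprod_apply, MultilinearMap.mkPiAlgebraFin_apply]

lemma toDirectSum_toT (v : ⨂[k] (_ : Fin n), V) :
    TensorAlgebra.toDirectSum (toT k n V v) = DirectSum.of (fun m => ⨂[k]^m V) n v := by
  induction v using PiTensorProduct.induction_on with
  | smul_tprod r a =>
    rw [map_smul, map_smul, toT_tprod, TensorAlgebra.toDirectSum_tensorPower_tprod,
      ← DirectSum.lof_eq_of k, ← DirectSum.lof_eq_of k, map_smul]
  | add v w hv hw => rw [map_add, map_add, hv, hw, map_add]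

lemma toT_injective : Function.Injective (toT k n V) := fun v w h =>
  DirectSum.of_injective (β := fun m => ⨂[k]^m V) n <| by
    rw [← toDirectSum_toT, ← toDirectSum_toT, h]

lemma toT_mem_pow (v : ⨂[k] (_ : Fin n), V) :
    toT k n V v ∈ LinearMap.range (TensorAlgebra.ι k : V →ₗ[k] _) ^ n := by
  induction v using PiTensorProduct.induction_on with
  | smul_tprod r a =>
    rw [map_smul, toT_tprod, TensorAlgebra.tprod_apply]
    refine Submodule.smul_mem _ r ?_
    have h := SetLike.list_prod_ofFn_mem_graded
      (A := (LinearMap.range (TensorAlgebra.ι k : V →ₗ[k] _) ^ ·)) (fun _ => 1)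
      (fun i => TensorAlgebra.ι k (a i)) (fun i => by simp)
    rwa [show (List.ofFn fun _ : Fin n => 1).sum = n by simp] at h
  | add v w hv hw => rw [map_add]; exact add_mem hv hw

lemma toT_map (f : V →ₗ[k] W) (v : ⨂[k] (_ : Fin n), V) :
    toT k n W (PiTensorProduct.map (fun _ => f) v)
      = TensorAlgebra.lift k (TensorAlgebra.ι k ∘ₗ f) (toT k n V v) := by
  induction v using PiTensorProduct.induction_on with
  | smul_tprod r a =>
    simp only [map_smul, PiTensorProduct.map_tprod, toT_tprod, TensorAlgebra.tprod_apply,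
      map_list_prod, List.map_ofFn, Function.comp_def, TensorAlgebra.lift_ι_apply,
      LinearMap.comp_apply]
  | add v w hv hw => simp only [map_add, hv, hw]

lemma map_mem_liePow (f : V →ₗ[k] W) {v : ⨂[k] (_ : Fin n), V} (hv : v ∈ LiePow k n V) :
    PiTensorProduct.map (fun _ => f) v ∈ LiePow k n W := by
  let F := (TensorAlgebra.lift k (TensorAlgebra.ι k ∘ₗ f)).toLieHom
  have hF : toT k n W (PiTensorProduct.map (fun _ => f) v)
      ∈ (LieSubalgebra.lieSpan k _ (Set.range (TensorAlgebra.ι k : V →ₗ[k] _))).map F :=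
    (LieSubalgebra.mem_map F _ _).2 ⟨_, hv, (toT_map f v).symm⟩
  rw [LieSubalgebra.map_lieSpan] at hF
  refine LieSubalgebra.lieSpan_mono ?_ hF
  rintro _ ⟨_, ⟨x, rfl⟩, rfl⟩
  exact ⟨f x, by simp [F]⟩

lemma liePow_le_of_forall_lnb_mem (S : Submodule k (⨂[k] (_ : Fin n), V))
    (hS : ∀ a : Fin n → V,
      ∃ s ∈ S, toT k n V s = lnb (List.ofFn fun i => TensorAlgebra.ι k (a i))) :
    LiePow k n V ≤ S := by
  let 𝒜 : ℕ → Submodule k (TensorAlgebra k V) := (LinearMap.range (TensorAlgebra.ι k) ^ ·)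
  have hproj : Submodule.span k (Set.range fun l : List V => lnb (l.map (TensorAlgebra.ι k)))
      ≤ (S.map (toT k n V)).comap (GradedAlgebra.proj 𝒜 n) := by
    rw [Submodule.span_le]
    rintro _ ⟨l, rfl⟩
    have hdeg : lnb (l.map (TensorAlgebra.ι k)) ∈ 𝒜 l.length := by
      simpa using lnb_mem_graded 𝒜 (l := l.map (TensorAlgebra.ι k)) (by simp [𝒜])
    by_cases hl : l.length = n
    · subst hl
      obtain ⟨s, hs, hst⟩ := hS fun i : Fin l.length => l[(i : ℕ)]
      rw [SetLike.mem_coe, Submodule.mem_comap, GradedAlgebra.proj_apply,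
        DirectSum.decompose_of_mem_same 𝒜 hdeg, ← List.ofFn_getElem_eq_map, ← hst]
      exact Submodule.mem_map_of_mem hs
    · rw [SetLike.mem_coe, Submodule.mem_comap, GradedAlgebra.proj_apply,
        DirectSum.decompose_of_mem_ne 𝒜 hdeg hl]
      exact zero_mem _
  intro v hv
  obtain ⟨s, hs, hst⟩ := hproj (lieSpan_le_span_lnb _ hv)
  rw [GradedAlgebra.proj_apply, DirectSum.decompose_of_mem_same 𝒜 (toT_mem_pow v)] at hst
  exact toT_injective hst ▸ hs

end TensorPower

lemma List.Perm.exists_ofFn_eq {n : ℕ} {m : List (Fin n)} (hm : m.Perm (List.finRange n)) :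
    ∃ σ : Equiv.Perm (Fin n), List.ofFn σ = m := by
  have hlen : m.length = n := by simpa using hm.length_eq
  refine ⟨(finCongr hlen.symm).trans <| List.Nodup.getEquivOfForallMemList m
    (hm.nodup_iff.2 (List.nodup_finRange n)) fun i => hm.mem_iff.2 (List.mem_finRange i), ?_⟩
  conv_rhs => rw [← List.ofFn_get m, List.ofFn_congr hlen]
  rfl

section Monomials

variable {k : Type} [Field k] {n : ℕ} {V : Type} [AddCommGroup V] [Module k V]

lemma monom_eq_basis_piTensorProduct (σ : Equiv.Perm (Fin n)) :
    monom k n σ = Basis.piTensorProduct (fun _ => Pi.basisFun k (Fin n)) σ := by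
  simp [monom]

lemma linearIndependent_monom : LinearIndependent k (monom k n) := by
  simp_rw [funext monom_eq_basis_piTensorProduct]
  exact (Module.Basis.linearIndependent _).comp _ DFunLike.coe_injective

lemma funLeft_symm_single (σ : Equiv.Perm (Fin n)) (i : Fin n) :
    LinearMap.funLeft k k σ.symm (Pi.single i 1) = Pi.single (σ i) 1 :=
  Pi.single_comp_equiv σ.symm i 1

variable (k n) in
noncomputable def gammanBasis : Module.Basis (Equiv.Perm (Fin n)) k (gamman k n) :=
  Module.Basis.span linearIndependent_monom

lemma coe_gammanBasis (σ : Equiv.Perm (Fin n)) : (gammanBasis k n σ : _) = monom k n σ :=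
  congrArg Subtype.val (Module.Basis.span_apply linearIndependent_monom σ)

lemma rAct_monom (σ τ : Equiv.Perm (Fin n)) :
    rAct k n σ (monom k n τ) = monom k n (σ * τ) := by
  simp [rAct, monom, funLeft_symm_single]

lemma lAct_tprod (σ : Equiv.Perm (Fin n)) (a : Fin n → V) :
    lAct k n V σ (PiTensorProduct.tprod k a) = PiTensorProduct.tprod k (a ∘ σ) := by
  simp only [lAct, LinearEquiv.coe_coe, PiTensorProduct.reindex_tprod]
  rfl

lemma toT_monom (σ : Equiv.Perm (Fin n)) :
    toT k n (Fin n → k) (monom k n σ)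
      = ((List.ofFn σ).map fun i => TensorAlgebra.ι k (Pi.single i (1 : k))).prod := by
  rw [monom, toT_tprod, TensorAlgebra.tprod_apply, List.map_ofFn]
  rfl

lemma map_linearCombination_monom (a : Fin n → V) (σ : Equiv.Perm (Fin n)) :
    PiTensorProduct.map (fun _ => Fintype.linearCombination k a) (monom k n σ)
      = lAct k n V σ (PiTensorProduct.tprod k a) := by
  simp [monom, lAct_tprod, Function.comp_def]

lemma map_linearCombination_rAct (a : Fin n → V) (σ : Equiv.Perm (Fin n))
    (t : ⨂[k] (_ : Fin n), (Fin n → k)) :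
    PiTensorProduct.map (fun _ => Fintype.linearCombination k a) (rAct k n σ t)
      = PiTensorProduct.map (fun _ => Fintype.linearCombination k (a ∘ σ)) t := by
  have : Fintype.linearCombination k a ∘ₗ LinearMap.funLeft k k σ.symm
      = Fintype.linearCombination k (a ∘ σ) := by
    ext j
    simp [funLeft_symm_single]
  rw [rAct, ← LinearMap.comp_apply, ← PiTensorProduct.map_comp, this]

lemma exists_mem_lieMulti_toT_eq_lnb : ∃ t ∈ LieMulti k n,
    toT k n (Fin n → k) t = lnb (List.ofFn fun i => TensorAlgebra.ι k (Pi.single i (1 : k))) := by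
  let e : Fin n → TensorAlgebra k (Fin n → k) := fun i => TensorAlgebra.ι k (Pi.single i 1)
  have hspan :
      Submodule.span k {y | ∃ m : List (Fin n), m.Perm (List.finRange n) ∧ (m.map e).prod = y}
        ≤ (gamman k n).map (toT k n (Fin n → k)) := by
    rw [Submodule.span_le]
    rintro _ ⟨m, hm, rfl⟩
    obtain ⟨σ, rfl⟩ := hm.exists_ofFn_eq
    exact ⟨monom k n σ, Submodule.subset_span ⟨σ, rfl⟩, toT_monom σ⟩
  obtain ⟨t, ht, hte⟩ := hspan (lnb_mem_span_prod_perm e (List.finRange n))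
  rw [← List.ofFn_eq_map] at hte
  refine ⟨t, Submodule.mem_inf.2 ⟨?_, ht⟩, hte⟩
  rw [LiePow, Submodule.mem_comap, hte]
  refine LieSubalgebra.lnb_mem _ fun x hx => ?_
  obtain ⟨i, rfl⟩ := List.mem_ofFn.1 hx
  exact LieSubalgebra.subset_lieSpan ⟨_, rfl⟩

end Monomials

section GammaAction

variable {k : Type} [Field k] {n : ℕ} {Γ : Type} [AddCommGroup Γ] [Module k Γ]
  (uΓ : Γ →ₗ[k] ⨂[k] (_ : Fin n), (Fin n → k)) (hΓinj : Function.Injective uΓ)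
  (hΓ : LinearMap.range uΓ = gamman k n)

noncomputable def gammaBasis : Module.Basis (Equiv.Perm (Fin n)) k Γ :=
  (gammanBasis k n).map
    ((LinearEquiv.ofEq _ _ hΓ.symm).trans (LinearEquiv.ofInjective uΓ hΓinj).symm)

lemma apply_gammaBasis (σ : Equiv.Perm (Fin n)) : uΓ (gammaBasis uΓ hΓinj hΓ σ) = monom k n σ := by
  rw [gammaBasis, Module.Basis.map_apply, LinearEquiv.trans_apply,
    ← LinearEquiv.ofInjective_apply (h := hΓinj), LinearEquiv.apply_symm_apply,
    LinearEquiv.coe_ofEq_apply, coe_gammanBasis]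

variable (V : Type) [AddCommGroup V] [Module k V]

noncomputable def gammaAct : Γ →ₗ[k] Module.End k (⨂[k] (_ : Fin n), V) :=
  (gammaBasis uΓ hΓinj hΓ).constr k (lAct k n V)

lemma gammaAct_gammaBasis (σ : Equiv.Perm (Fin n)) :
    gammaAct uΓ hΓinj hΓ V (gammaBasis uΓ hΓinj hΓ σ) = lAct k n V σ :=
  Module.Basis.constr_basis _ _ _ σ

variable {V}

lemma gammaAct_tprod (g : Γ) (a : Fin n → V) :
    gammaAct uΓ hΓinj hΓ V g (PiTensorProduct.tprod k a)
      = PiTensorProduct.map (fun _ => Fintype.linearCombination k a) (uΓ g) := by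
  suffices (gammaAct uΓ hΓinj hΓ V).flip (PiTensorProduct.tprod k a)
      = PiTensorProduct.map (fun _ => Fintype.linearCombination k a) ∘ₗ uΓ from
    LinearMap.congr_fun this g
  refine (gammaBasis uΓ hΓinj hΓ).ext fun σ => ?_
  simp [gammaAct_gammaBasis, apply_gammaBasis, map_linearCombination_monom]

lemma gammaAct_eq_comp_lAct {x y : Γ} {σ : Equiv.Perm (Fin n)}
    (h : uΓ y = rAct k n σ (uΓ x)) :
    gammaAct uΓ hΓinj hΓ V y = gammaAct uΓ hΓinj hΓ V x ∘ₗ lAct k n V σ := by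
  refine PiTensorProduct.ext (MultilinearMap.ext fun a => ?_)
  simp [gammaAct_tprod, h, map_linearCombination_rAct, lAct_tprod]

lemma gammaAct_mem_liePow {g : Γ} (hg : uΓ g ∈ LiePow k n (Fin n → k))
    (v : ⨂[k] (_ : Fin n), V) : gammaAct uΓ hΓinj hΓ V g v ∈ LiePow k n V := by
  induction v using PiTensorProduct.induction_on with
  | smul_tprod r a =>
    rw [map_smul, gammaAct_tprod]
    exact Submodule.smul_mem _ r (map_mem_liePow _ hg)
  | add v w hv hw => rw [map_add]; exact add_mem hv hw

lemma toT_gammaAct_tprod {g : Γ}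
    (hg : toT k n (Fin n → k) (uΓ g)
      = lnb (List.ofFn fun i => TensorAlgebra.ι k (Pi.single i (1 : k))))
    (a : Fin n → V) :
    toT k n V (gammaAct uΓ hΓinj hΓ V g (PiTensorProduct.tprod k a))
      = lnb (List.ofFn fun i => TensorAlgebra.ι k (a i)) := by
  rw [gammaAct_tprod, toT_map, hg, map_lnb, List.map_ofFn]
  simp [Function.comp_def]

lemma mkQ_eq_mkQ_one_tmul_lift_gammaAct :
    (balRel k n V Γ uΓ).mkQ = (balRel k n V Γ uΓ).mkQ
      ∘ₗ TensorProduct.mk k Γ _ (gammaBasis uΓ hΓinj hΓ 1)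
      ∘ₗ TensorProduct.lift (gammaAct uΓ hΓinj hΓ V) := by
  refine TensorProduct.ext ((gammaBasis uΓ hΓinj hΓ).ext fun σ => LinearMap.ext fun v => ?_)
  simp only [LinearMap.compr₂ₛₗ_apply, TensorProduct.mk_apply, LinearMap.comp_apply,
    TensorProduct.lift.tmul, gammaAct_gammaBasis, Submodule.mkQ_apply, Submodule.Quotient.eq]
  refine Submodule.subset_span ⟨_, _, σ, v, ?_, rfl⟩
  rw [apply_gammaBasis, apply_gammaBasis, rAct_monom, mul_one]

lemma ker_lift_gammaAct :
    LinearMap.ker (TensorProduct.lift (gammaAct uΓ hΓinj hΓ V)) = balRel k n V Γ uΓ := by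
  refine le_antisymm (fun z hz => ?_) ?_
  · have h := LinearMap.congr_fun (mkQ_eq_mkQ_one_tmul_lift_gammaAct uΓ hΓinj hΓ (V := V)) z
    rw [LinearMap.mem_ker] at hz
    simpa [hz] using h
  · rw [balRel, Submodule.span_le]
    rintro _ ⟨x, y, σ, v, h, rfl⟩
    simp [gammaAct_eq_comp_lAct uΓ hΓinj hΓ h]

end GammaAction

lemma balRel_map_rTensor_le {k : Type} [Field k] {n : ℕ} {V : Type} [AddCommGroup V] [Module k V]
    {Λ Γ : Type} [AddCommGroup Λ] [Module k Λ] [AddCommGroup Γ] [Module k Γ]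
    {uΛ : Λ →ₗ[k] ⨂[k] (_ : Fin n), (Fin n → k)} {uΓ : Γ →ₗ[k] ⨂[k] (_ : Fin n), (Fin n → k)}
    {inc : Λ →ₗ[k] Γ} (hinc : uΓ ∘ₗ inc = uΛ) :
    (balRel k n V Λ uΛ).map (LinearMap.rTensor _ inc) ≤ balRel k n V Γ uΓ := by
  rw [balRel, Submodule.map_span_le]
  rintro _ ⟨x, y, σ, v, h, rfl⟩
  refine Submodule.subset_span ⟨inc x, inc y, σ, v, ?_, by simp⟩
  subst hinc
  exact h

/-- Since `γ_n` is free, `Tor_1^{k(Σ_n)}(γ_n/Lie(n), V^{⊗n})` is the kernel of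
`Lie(n) ⊗_{k(Σ_n)} V^{⊗n} → γ_n ⊗_{k(Σ_n)} V^{⊗n}`. `Lie(n)` and `γ_n` are realized by modules
`Λ`, `Γ`, and `⊗_{k(Σ_n)}` as the quotient by the balancing relations. -/
theorem stmt8_general (k : Type) [Field k] (n : ℕ) (V : Type) [AddCommGroup V] [Module k V]
    (Λ Γ : Type) [AddCommGroup Λ] [Module k Λ] [AddCommGroup Γ] [Module k Γ]
    (uΛ : Λ →ₗ[k] ⨂[k] (i : Fin n), (Fin n → k))
    (uΓ : Γ →ₗ[k] ⨂[k] (i : Fin n), (Fin n → k))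
    (hΛ : LinearMap.range uΛ = LieMulti k n)
    (hΓinj : Function.Injective uΓ) (hΓ : LinearMap.range uΓ = gamman k n)
    (inc : Λ →ₗ[k] Γ) (hinc : uΓ.comp inc = uΛ) :
    ∃ Φ : ((Λ ⊗[k] (⨂[k] (i : Fin n), V)) ⧸ balRel k n V Λ uΛ) →ₗ[k] ⨂[k] (i : Fin n), V,
      -- Φ is the natural map onto the Lie power L_n(V)
      LinearMap.range Φ = LiePow k n V ∧
      -- on generators it is given by bracketing
      (∀ x : Λ,
        toT k n (Fin n → k) (uΛ x)
            = lnb (List.ofFn fun i : Fin n => TensorAlgebra.ι k (Pi.single i (1 : k))) →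
        ∀ a : Fin n → V,
          toT k n V (Φ (Submodule.Quotient.mk (x ⊗ₜ[k] PiTensorProduct.tprod k a)))
            = lnb (List.ofFn fun i : Fin n => TensorAlgebra.ι k (a i))) ∧
      -- its kernel is Tor_1^{k(Σ_n)}(γ_n/Lie(n), V^{⊗n}), i.e. the kernel of the map
      -- Lie(n) ⊗_{k(Σ_n)} V^{⊗n} → γ_n ⊗_{k(Σ_n)} V^{⊗n} induced by the inclusion
      (∀ z : Λ ⊗[k] (⨂[k] (i : Fin n), V),
        Φ (Submodule.Quotient.mk z) = 0 ↔
          (Submodule.Quotient.mk (LinearMap.rTensor (⨂[k] (i : Fin n), V) inc z)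
            : (Γ ⊗[k] (⨂[k] (i : Fin n), V)) ⧸ balRel k n V Γ uΓ) = 0) := by
  have hinc_apply : ∀ x, uΓ (inc x) = uΛ x := LinearMap.congr_fun hinc
  have hker : balRel k n V Λ uΛ
      ≤ LinearMap.ker (TensorProduct.lift (gammaAct uΓ hΓinj hΓ V) ∘ₗ LinearMap.rTensor _ inc) := by
    rw [LinearMap.ker_comp, ← Submodule.map_le_iff_le_comap, ker_lift_gammaAct]
    exact balRel_map_rTensor_le hinc
  refine ⟨(balRel k n V Λ uΛ).liftQ _ hker, ?_, fun x hx a => ?_, fun z => ?_⟩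
  · obtain ⟨t, ht, hte⟩ := exists_mem_lieMulti_toT_eq_lnb (k := k) (n := n)
    obtain ⟨x₀, rfl⟩ : t ∈ LinearMap.range uΛ := hΛ ▸ ht
    rw [Submodule.range_liftQ]
    refine le_antisymm ?_ (liePow_le_of_forall_lnb_mem _ fun a =>
      ⟨_, LinearMap.mem_range_self _ (x₀ ⊗ₜ PiTensorProduct.tprod k a), ?_⟩)
    · rw [LinearMap.range_le_iff_comap, ← top_le_iff, ← TensorProduct.span_tmul_eq_top,
        Submodule.span_le]
      rintro _ ⟨x, v, rfl⟩
      have hx : uΛ x ∈ LieMulti k n := hΛ ▸ LinearMap.mem_range_self uΛ x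
      exact gammaAct_mem_liePow uΓ hΓinj hΓ (by rw [hinc_apply]; exact hx.1) v
    · simpa using toT_gammaAct_tprod uΓ hΓinj hΓ (by rw [hinc_apply]; exact hte) a
  · simpa using toT_gammaAct_tprod uΓ hΓinj hΓ (by rw [hinc_apply]; exact hx) a
  · rw [Submodule.liftQ_apply, Submodule.Quotient.mk_eq_zero, ← ker_lift_gammaAct uΓ hΓinj hΓ,
      LinearMap.mem_ker, LinearMap.comp_apply]

/-- For every `V` there is a natural short exact sequence
`Tor_1^{k(Σ_n)}(γ_n/Lie(n), V^{⊗n}) ↪ Lie(n) ⊗_{k(Σ_n)} V^{⊗n} ↠ L_n(V)`, the surjection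
sending `[[x_1,x_2],…,x_n] ⊗ (a_1 ⊗ ⋯ ⊗ a_n)` to `[[a_1,a_2],…,a_n]`.  Since `γ_n` is free,
`Tor_1^{k(Σ_n)}(γ_n/Lie(n), V^{⊗n})` is the kernel of
`Lie(n) ⊗_{k(Σ_n)} V^{⊗n} → γ_n ⊗_{k(Σ_n)} V^{⊗n}`, which is how the kernel is identified
below.  (`Lie(n)` and `γ_n` are realized by modules `Λ`, `Γ`, and `⊗_{k(Σ_n)}` as the quotient
by the balancing relations.) -/
theorem stmt8 (k : Type) [Field k] (n : ℕ) (V : Type) [AddCommGroup V] [Module k V]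
    (Λ Γ : Type) [AddCommGroup Λ] [Module k Λ] [AddCommGroup Γ] [Module k Γ]
    (uΛ : Λ →ₗ[k] ⨂[k] (i : Fin n), (Fin n → k))
    (uΓ : Γ →ₗ[k] ⨂[k] (i : Fin n), (Fin n → k))
    (hΛinj : Function.Injective uΛ) (hΛ : LinearMap.range uΛ = LieMulti k n)
    (hΓinj : Function.Injective uΓ) (hΓ : LinearMap.range uΓ = gamman k n)
    (inc : Λ →ₗ[k] Γ) (hinc : uΓ.comp inc = uΛ) :
    ∃ Φ : ((Λ ⊗[k] (⨂[k] (i : Fin n), V)) ⧸ balRel k n V Λ uΛ) →ₗ[k] ⨂[k] (i : Fin n), V,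
      -- Φ is the natural map onto the Lie power L_n(V)
      LinearMap.range Φ = LiePow k n V ∧
      -- on generators it is given by bracketing
      (∀ x : Λ,
        toT k n (Fin n → k) (uΛ x)
            = lnb (List.ofFn fun i : Fin n => TensorAlgebra.ι k (Pi.single i (1 : k))) →
        ∀ a : Fin n → V,
          toT k n V (Φ (Submodule.Quotient.mk (x ⊗ₜ[k] PiTensorProduct.tprod k a)))
            = lnb (List.ofFn fun i : Fin n => TensorAlgebra.ι k (a i))) ∧
      -- its kernel is Tor_1^{k(Σ_n)}(γ_n/Lie(n), V^{⊗n}), i.e. the kernel of the map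
      -- Lie(n) ⊗_{k(Σ_n)} V^{⊗n} → γ_n ⊗_{k(Σ_n)} V^{⊗n} induced by the inclusion
      (∀ z : Λ ⊗[k] (⨂[k] (i : Fin n), V),
        Φ (Submodule.Quotient.mk z) = 0 ↔
          (Submodule.Quotient.mk (LinearMap.rTensor (⨂[k] (i : Fin n), V) inc z)
            : (Γ ⊗[k] (⨂[k] (i : Fin n), V)) ⧸ balRel k n V Γ uΓ) = 0) :=
  stmt8_general k n V Λ Γ uΛ uΓ hΛ hΓinj hΓ inc hinc
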